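/- Let G be an infinite, locally finite, connected, claw-free graph, X a finite vertex set with G[X] connected, and 𝔖 a finite vertex set disjoint from X, minimal with the property that every ray starting in X meets 𝔖. Then G − 𝔖 has k ≥ 1 infinite components K₁, …, K_k, and 𝔖 is the disjoint union of sets S₁, …, S_k such that each Sᵢ is a minimal vertex separator of G and, for each i, every vertex of Sᵢ has a neighbour in K_j if and only if j = i. -/

import Mathlib

open SimpleGraph

/-- The claw `K_{1,3}`: vertex `0` is the centre, adjacent to `1`, `2`, `3`. -/
def claw : SimpleGraph (Fin 4) := SimpleGraph.fromRel (fun a _ => a = 0)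

/-- The paw: a triangle on `1, 2, 3` with pendant vertex `0` attached to `1`. -/
def paw : SimpleGraph (Fin 4) :=
  SimpleGraph.fromRel (fun a b => (a = 0 ∧ b = 1) ∨ (a ≠ 0 ∧ b ≠ 0))

/-- `G` is `H`-free: no induced subgraph of `G` is isomorphic to `H`.
(`H ↪g G` is a graph embedding, i.e. an isomorphism onto an induced subgraph.) -/
def HFree {W V : Type*} (H : SimpleGraph W) (G : SimpleGraph V) : Prop :=
  ¬ Nonempty (H ↪g G)

/-- `G` is 2-connected: at least 3 vertices, connected, and deleting any vertex
leaves it connected. -/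
def TwoConnected {V : Type*} (G : SimpleGraph V) : Prop :=
  (∃ a b c : V, a ≠ b ∧ a ≠ c ∧ b ≠ c) ∧ G.Connected ∧
    ∀ v : V, (G.induce {u | u ≠ v}).Connected

/-- The hypothesis that every induced paw of `G`, with pendant vertex `a₁` adjacent
precisely to the triangle vertex `a₀`, satisfies `φ(a₁,b₁)` or `φ(a₁,b₂)`:
`a₁` has a common neighbour outside the paw with `b₁` or with `b₂`. -/
def PawCondition {V : Type*} (G : SimpleGraph V) : Prop :=
  ∀ a₁ a₀ b₁ b₂ : V,
    G.Adj a₁ a₀ → G.Adj a₀ b₁ → G.Adj a₀ b₂ → G.Adj b₁ b₂ →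
    ¬ G.Adj a₁ b₁ → ¬ G.Adj a₁ b₂ → a₁ ≠ b₁ → a₁ ≠ b₂ →
    ∃ x, x ∉ ({a₁, a₀, b₁, b₂} : Set V) ∧ G.Adj x a₁ ∧ (G.Adj x b₁ ∨ G.Adj x b₂)

/-- A ray (one-way infinite path) in `G`, given by its sequence of vertices. -/
def IsRay {V : Type*} (G : SimpleGraph V) (f : ℕ → V) : Prop :=
  Function.Injective f ∧ ∀ n, G.Adj (f n) (f (n + 1))

/-- Two rays are equivalent (belong to the same end) if no finite vertex set
separates them. -/
def EndEquiv {V : Type*} (G : SimpleGraph V) (f g : ℕ → V) : Prop :=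
  ∀ S : Set V, S.Finite →
    ∃ (m n : ℕ) (p : G.Walk (f m) (g n)), ∀ x ∈ p.support, x ∉ S

/-- The ends of `G`, as equivalence classes of rays. -/
def Ends {V : Type*} (G : SimpleGraph V) : Type _ :=
  Quot (fun f g : {f : ℕ → V // IsRay G f} => EndEquiv G f.1 g.1)

/-- The edge cut `δ(X)`. -/
def edgeCut {V : Type*} (G : SimpleGraph V) (X : Set V) : Set (Sym2 V) :=
  {e | e ∈ G.edgeSet ∧ ∃ a b, e = s(a, b) ∧ a ∈ X ∧ b ∉ X}

/-- `G` has a Hamilton circle in its Freudenthal compactification `|G|`,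
expressed combinatorially: there is a spanning edge set `C` in which every
vertex has degree exactly `2` and which meets every finite cut of `G` in a
positive even number of edges (for locally finite connected `G` this
characterises edge sets whose closure in `|G|` is a circle through all
vertices). -/
def HasHamiltonCircle {V : Type*} (G : SimpleGraph V) : Prop :=
  ∃ C ⊆ G.edgeSet, (∀ v : V, {e ∈ C | v ∈ e}.ncard = 2) ∧
    ∀ X : Set V, X.Nonempty → Xᶜ.Nonempty → (edgeCut G X).Finite →
      (C ∩ edgeCut G X).Nonempty ∧ Even ((C ∩ edgeCut G X).ncard)

/-- The end represented by the ray `g` lies in the closure (in `|G|`) of the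
vertex set `M`: for every finite `S`, the component of `G - S` containing a
tail of `g` meets `M`. -/
def EndInClosure {V : Type*} (G : SimpleGraph V) (g : ℕ → V) (M : Set V) : Prop :=
  ∀ S : Set V, S.Finite → ∃ u ∈ M, ∃ N : ℕ, ∀ n ≥ N,
    ∃ p : G.Walk u (g n), ∀ x ∈ p.support, x ∉ S

/-- `S` is a vertex separator of `G`: `G - S` is disconnected. -/
def IsSeparator {V : Type*} (G : SimpleGraph V) (S : Set V) : Prop :=
  ∃ (u : V) (hu : u ∉ S) (v : V) (hv : v ∉ S),
    ¬ (G.induce {x | x ∉ S}).Reachable ⟨u, hu⟩ ⟨v, hv⟩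

/-- `S` is a minimal vertex separator of `G`. -/
def IsMinSeparator {V : Type*} (G : SimpleGraph V) (S : Set V) : Prop :=
  IsSeparator G S ∧ ∀ T ⊂ S, ¬ IsSeparator G T

/-- The `k`-blow-up of `G`: each vertex is replaced by a `k`-clique. -/
def blowup {V : Type*} (G : SimpleGraph V) (k : ℕ) : SimpleGraph (V × Fin k) where
  Adj x y := (x.1 = y.1 ∧ x.2 ≠ y.2) ∨ G.Adj x.1 y.1
  symm := by
    constructor
    rintro x y (⟨h1, h2⟩ | h)
    · exact Or.inl ⟨h1.symm, h2.symm⟩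
    · exact Or.inr h.symm
  loopless := by
    constructor
    rintro x (⟨_, h⟩ | h)
    · exact h rfl
    · exact G.loopless.irrefl _ h

/-!
Let `C` be the component of `G - 𝔖` containing `X`. It is finite, since by Kőnig's lemma an
infinite `C` would contain a ray from `X` avoiding `𝔖`. By minimality each `s ∈ 𝔖` lies on a
ray from `X` that meets `𝔖` only in `s`; so `s` has a neighbour in `C` and one in an infinite
component, and claw-freeness forbids neighbours in a third component, as vertices of distinct
components are non-adjacent. As `G` is connected every component of `G - 𝔖` has a neighbour in
`𝔖`, so the components are `C` and finitely many infinite ones `Kᵢ`, and `Sᵢ := N(Kᵢ)`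
partitions `𝔖`. `Sᵢ` separates `Kᵢ` from `C`, while after deleting a proper subset `T ⊂ Sᵢ`
every vertex still reaches `C`: through a vertex of `Sᵢ \ T` if it lies in `Kᵢ`, and through
a vertex of another `Sⱼ` if it lies in `Kⱼ`.
-/

section Rays

variable {V : Type*} {G : SimpleGraph V}

def reachableAvoiding (G : SimpleGraph V) (P : Set V) (u : V) : Set V :=
  {x | ∃ q : G.Walk u x, ∀ y ∈ q.support, y ∉ P}

lemma notMem_of_reachableAvoiding_nonempty {P : Set V} {u : V}
    (h : (reachableAvoiding G P u).Nonempty) : u ∉ P := by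
  obtain ⟨x, q, hq⟩ := h
  exact hq u q.start_mem_support

lemma reachableAvoiding_subset_insert_biUnion (P : Set V) (u : V) :
    reachableAvoiding G P u ⊆
      insert u (⋃ w ∈ G.neighborSet u, reachableAvoiding G (insert u P) w) := by
  classical
  rintro x ⟨q, hq⟩
  have hpath := q.bypass_isPath
  have havoid : ∀ y ∈ q.bypass.support, y ∉ P :=
    fun y hy => hq y (q.support_bypass_subset_support hy)
  generalize q.bypass = p at hpath havoid
  cases p with
  | nil => exact Set.mem_insert _ _
  | cons hadj r =>
    rw [Walk.cons_isPath_iff] at hpath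
    refine Or.inr (Set.mem_biUnion hadj ⟨r, fun y hy => ?_⟩)
    rintro (rfl | hyP)
    · exact hpath.2 hy
    · exact havoid y (by simp [hy]) hyP

lemma exists_adj_infinite_reachableAvoiding (hlf : ∀ v, (G.neighborSet v).Finite)
    {P : Set V} {u : V} (h : (reachableAvoiding G P u).Infinite) :
    ∃ w, G.Adj u w ∧ (reachableAvoiding G (insert u P) w).Infinite := by
  by_contra! hfin
  exact h ((((hlf u).biUnion hfin).insert u).subset
    (reachableAvoiding_subset_insert_biUnion P u))

-- Kőnig's infinity lemma.
lemma exists_ray_of_infinite_reachableAvoiding (hlf : ∀ v, (G.neighborSet v).Finite)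
    {P : Set V} {u : V} (h : (reachableAvoiding G P u).Infinite) :
    ∃ f : ℕ → V, IsRay G f ∧ f 0 = u ∧ ∀ n, f n ∉ P := by
  let State := {p : V × Set V // (reachableAvoiding G p.2 p.1).Infinite}
  let next (s : State) := exists_adj_infinite_reachableAvoiding hlf s.2
  -- the state after `n` steps is the current vertex together with `P` and all earlier vertices
  let seq : ℕ → State := fun n => Nat.rec ⟨(u, P), h⟩
    (fun _ s => ⟨((next s).choose, insert s.1.1 s.1.2), (next s).choose_spec.2⟩) n
  let f n := (seq n).1.1
  have hnotMem : ∀ n, f n ∉ (seq n).1.2 :=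
    fun n => notMem_of_reachableAvoiding_nonempty (seq n).2.nonempty
  have hP : ∀ n, P ⊆ (seq n).1.2 := by
    intro n
    induction n with
    | zero => exact subset_rfl
    | succ n ih => exact ih.trans (Set.subset_insert _ _)
  have hearlier : ∀ n, ∀ m < n, f m ∈ (seq n).1.2 := by
    intro n
    induction n with
    | zero => intro m hm; omega
    | succ n ih =>
      intro m hm
      rcases Nat.lt_succ_iff_lt_or_eq.1 hm with hm | rfl
      · exact Set.mem_insert_of_mem _ (ih m hm)
      · exact Set.mem_insert _ _
  refine ⟨f, ⟨Function.Injective.of_lt_imp_ne fun m n hmn heq => ?_,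
    fun n => (next (seq n)).choose_spec.1⟩, rfl, fun n hn => hnotMem n (hP n hn)⟩
  exact hnotMem n (heq ▸ hearlier n m hmn)

lemma IsRay.tail {f : ℕ → V} (hf : IsRay G f) (k : ℕ) : IsRay G fun j => f (k + j) :=
  ⟨hf.1.comp (add_right_injective k), fun j => hf.2 (k + j)⟩

end Rays

section Components

variable {V : Type*} {G : SimpleGraph V} {S : Set V}

lemma exists_walk_of_reachable_induce {A : Set V} {u v : A} (h : (G.induce A).Reachable u v) :
    ∃ p : G.Walk u v, ∀ x ∈ p.support, x ∈ A := by
  obtain ⟨q⟩ := h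
  refine ⟨q.map (Embedding.induce A).toHom, fun x hx => ?_⟩
  have hx' : x ∈ (q.map (Embedding.induce A).toHom).support := hx
  rw [Walk.support_map, List.mem_map] at hx'
  obtain ⟨y, -, rfl⟩ := hx'
  exact y.2

lemma connectedComponentMk_eq_of_adj {a b : V} (ha : a ∉ S) (hb : b ∉ S) (h : G.Adj a b) :
    (G.induce {x | x ∉ S}).connectedComponentMk ⟨a, ha⟩ =
      (G.induce {x | x ∉ S}).connectedComponentMk ⟨b, hb⟩ :=
  ConnectedComponent.sound (Adj.reachable (induce_adj.2 h))

lemma connectedComponentMk_eq_of_chain {f : ℕ → V} (hadj : ∀ i, G.Adj (f i) (f (i + 1)))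
    {n : ℕ} (hf : ∀ i ≤ n, f i ∉ S) :
    (G.induce {x | x ∉ S}).connectedComponentMk ⟨f n, hf n le_rfl⟩ =
      (G.induce {x | x ∉ S}).connectedComponentMk ⟨f 0, hf 0 n.zero_le⟩ := by
  induction n with
  | zero => rfl
  | succ n ih =>
    rw [← ih fun i hi => hf i (by omega)]
    exact (connectedComponentMk_eq_of_adj _ _ (hadj n)).symm

lemma preimage_val_subset_supp {X : Set V} (hXS : Disjoint X S)
    (hX : (G.induce X).Preconnected) {x : V} (hx : x ∈ X) :
    Subtype.val ⁻¹' X ⊆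
      ((G.induce {x | x ∉ S}).connectedComponentMk ⟨x, hXS.notMem_of_mem_left hx⟩).supp := by
  intro v hv
  exact ConnectedComponent.sound
    ((hX ⟨v, hv⟩ ⟨x, hx⟩).map (G.induceHomOfLE fun y hy => hXS.notMem_of_mem_left hy).toHom)

lemma IsRay.supp_infinite {f : ℕ → V} (hf : IsRay G f) (hS : ∀ n, f n ∉ S) :
    ((G.induce {x | x ∉ S}).connectedComponentMk ⟨f 0, hS 0⟩).supp.Infinite := by
  refine Set.infinite_of_injective_forall_mem (f := fun n => (⟨f n, hS n⟩ : {x | x ∉ S}))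
    (fun m n h => hf.1 (congrArg Subtype.val h)) fun n => ?_
  exact connectedComponentMk_eq_of_chain hf.2 fun i _ => hS i

lemma exists_ray_of_supp_infinite (hlf : ∀ v, (G.neighborSet v).Finite) (v : {x | x ∉ S})
    (h : ((G.induce {x | x ∉ S}).connectedComponentMk v).supp.Infinite) :
    ∃ f : ℕ → V, IsRay G f ∧ f 0 = v ∧ ∀ n, f n ∉ S := by
  refine exists_ray_of_infinite_reachableAvoiding hlf
    ((h.image Subtype.val_injective.injOn).mono ?_)
  rintro _ ⟨w, hw, rfl⟩
  exact exists_walk_of_reachable_induce (ConnectedComponent.exact hw).symm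

def HasNeighborIn (G : SimpleGraph V) (S : Set V) (s : V)
    (K : (G.induce {x | x ∉ S}).ConnectedComponent) : Prop :=
  ∃ y, G.Adj s y ∧ ∃ hy : y ∉ S, (G.induce {x | x ∉ S}).connectedComponentMk ⟨y, hy⟩ = K

-- The neighbourhood of the component `K` of `G - S`; these are the sets `Sᵢ` of the theorem.
def attachments (G : SimpleGraph V) (S : Set V)
    (K : (G.induce {x | x ∉ S}).ConnectedComponent) : Set V :=
  {s | s ∈ S ∧ HasNeighborIn G S s K}

lemma SimpleGraph.Walk.connectedComponentMk_eq_of_avoid_attachments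
    {K : (G.induce {x | x ∉ S}).ConnectedComponent} :
    ∀ {u v : V} (p : G.Walk u v), (∀ x ∈ p.support, x ∉ attachments G S K) →
      ∀ hu : u ∉ S, (G.induce {x | x ∉ S}).connectedComponentMk ⟨u, hu⟩ = K →
      ∃ hv : v ∉ S, (G.induce {x | x ∉ S}).connectedComponentMk ⟨v, hv⟩ = K
  | _, _, .nil, _, hu, huK => ⟨hu, huK⟩
  | _, _, .cons h p, hp, hu, huK => by
    have hw : _ ∉ S := fun hw => hp _ (by simp) ⟨hw, _, h.symm, hu, huK⟩
    exact Walk.connectedComponentMk_eq_of_avoid_attachments p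
      (fun x hx => hp x (by simp [hx])) hw ((connectedComponentMk_eq_of_adj hw hu h.symm).trans huK)

lemma exists_hasNeighborIn (hconn : G.Connected) (hS : S.Nonempty)
    (K : (G.induce {x | x ∉ S}).ConnectedComponent) : ∃ s ∈ S, HasNeighborIn G S s K := by
  by_contra! h
  obtain ⟨u, rfl⟩ := K.exists_rep
  obtain ⟨s, hs⟩ := hS
  obtain ⟨p⟩ := hconn.preconnected u s
  obtain ⟨hs', -⟩ :=
    p.connectedComponentMk_eq_of_avoid_attachments (fun x _ hx => h x hx.1 hx.2) u.2 rfl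
  exact hs' hs

lemma isSeparator_attachments {K K' : (G.induce {x | x ∉ S}).ConnectedComponent}
    (hKK' : K ≠ K') : IsSeparator G (attachments G S K) := by
  obtain ⟨u, rfl⟩ := K.exists_rep
  obtain ⟨v, rfl⟩ := K'.exists_rep
  refine ⟨u, fun h => u.2 h.1, v, fun h => v.2 h.1, fun huv => ?_⟩
  obtain ⟨p, hp⟩ := exists_walk_of_reachable_induce huv
  obtain ⟨_, hvK⟩ := p.connectedComponentMk_eq_of_avoid_attachments hp u.2 rfl
  exact hKK' hvK.symm

lemma reachable_of_hasNeighborIn {T : Set V} (hTS : T ⊆ S) {s : V} (hsT : s ∉ T)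
    {K : (G.induce {x | x ∉ S}).ConnectedComponent} (hs : HasNeighborIn G S s K)
    (v : {x | x ∉ S}) (hv : (G.induce {x | x ∉ S}).connectedComponentMk v = K) :
    (G.induce {x | x ∉ T}).Reachable ⟨s, hsT⟩ ⟨v, fun h => v.2 (hTS h)⟩ := by
  obtain ⟨y, hsy, hy, rfl⟩ := hs
  have hST : {x | x ∉ S} ⊆ {x | x ∉ T} := fun x hx hxT => hx (hTS hxT)
  exact (Adj.reachable (induce_adj.2 hsy)).trans
    ((ConnectedComponent.exact hv.symm).map (G.induceHomOfLE hST).toHom)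

-- Every vertex outside `T` is joined to `C` through a vertex of `S \ T`.
lemma not_isSeparator_of_forall_hasNeighborIn {T : Set V} (hTS : T ⊆ S)
    (C : (G.induce {x | x ∉ S}).ConnectedComponent)
    (hC : ∀ s ∈ S, s ∉ T → HasNeighborIn G S s C)
    (hK : ∀ K, ∃ s ∈ S, s ∉ T ∧ HasNeighborIn G S s K) : ¬ IsSeparator G T := by
  obtain ⟨x₀, rfl⟩ := C.exists_rep
  have hx₀T : x₀.1 ∉ T := fun h => x₀.2 (hTS h)
  have hS : ∀ s ∈ S, ∀ hsT : s ∉ T, (G.induce {x | x ∉ T}).Reachable ⟨s, hsT⟩ ⟨x₀, hx₀T⟩ :=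
    fun s hs hsT => reachable_of_hasNeighborIn hTS hsT (hC s hs hsT) x₀ rfl
  suffices h : ∀ v (hv : v ∉ T), (G.induce {x | x ∉ T}).Reachable ⟨v, hv⟩ ⟨x₀, hx₀T⟩ by
    rintro ⟨u, hu, v, hv, huv⟩
    exact huv ((h u hu).trans (h v hv).symm)
  intro v hv
  by_cases hvS : v ∈ S
  · exact hS v hvS hv
  · obtain ⟨s, hs, hsT, hsK⟩ := hK ((G.induce {x | x ∉ S}).connectedComponentMk ⟨v, hvS⟩)
    exact (reachable_of_hasNeighborIn hTS hsT hsK ⟨v, hvS⟩ rfl).symm.trans (hS s hs hsT)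

end Components

section ClawFree

variable {V : Type*} {G : SimpleGraph V}

lemma adj_or_adj_or_adj_of_hFree_claw (hclaw : HFree claw G) {s a b c : V}
    (hsa : G.Adj s a) (hsb : G.Adj s b) (hsc : G.Adj s c)
    (hab : a ≠ b) (hac : a ≠ c) (hbc : b ≠ c) :
    G.Adj a b ∨ G.Adj a c ∨ G.Adj b c := by
  by_contra! h
  obtain ⟨hab', hac', hbc'⟩ := h
  have hba' : ¬G.Adj b a := fun h => hab' h.symm
  have hca' : ¬G.Adj c a := fun h => hac' h.symm
  have hcb' : ¬G.Adj c b := fun h => hbc' h.symm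
  refine hclaw ⟨⟨⟨![s, a, b, c], fun x y hxy => ?_⟩, fun {x y} => ?_⟩⟩
  · fin_cases x <;> fin_cases y <;>
      simp_all [hsa.ne, hsb.ne, hsc.ne]
  · change G.Adj (![s, a, b, c] x) (![s, a, b, c] y) ↔ _
    fin_cases x <;> fin_cases y <;>
      simp [claw, fromRel_adj, hsa, hsb, hsc, hab', hac', hbc', hba', hca', hcb', hsa.symm,
        hsb.symm, hsc.symm]

lemma eq_or_eq_or_eq_of_hasNeighborIn (hclaw : HFree claw G) {S : Set V} {s : V}
    {K₁ K₂ K₃ : (G.induce {x | x ∉ S}).ConnectedComponent} (h₁ : HasNeighborIn G S s K₁)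
    (h₂ : HasNeighborIn G S s K₂) (h₃ : HasNeighborIn G S s K₃) :
    K₁ = K₂ ∨ K₁ = K₃ ∨ K₂ = K₃ := by
  obtain ⟨a, hsa, ha, rfl⟩ := h₁
  obtain ⟨b, hsb, hb, rfl⟩ := h₂
  obtain ⟨c, hsc, hc, rfl⟩ := h₃
  by_contra! h
  obtain ⟨hab, hac, hbc⟩ := h
  rcases adj_or_adj_or_adj_of_hFree_claw hclaw hsa hsb hsc (by rintro rfl; exact hab rfl)
      (by rintro rfl; exact hac rfl) (by rintro rfl; exact hbc rfl) with h | h | h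
  · exact hab (connectedComponentMk_eq_of_adj ha hb h)
  · exact hac (connectedComponentMk_eq_of_adj ha hc h)
  · exact hbc (connectedComponentMk_eq_of_adj hb hc h)

end ClawFree

section Umbrella

variable {V : Type*} {G : SimpleGraph V} {X S : Set V}

def MeetsAllRaysFrom (G : SimpleGraph V) (X T : Set V) : Prop :=
  ∀ f : ℕ → V, IsRay G f → f 0 ∈ X → ∃ n, f n ∈ T

lemma MeetsAllRaysFrom.nonempty [Infinite V] (hlf : ∀ v, (G.neighborSet v).Finite)
    (hconn : G.Connected) (h : MeetsAllRaysFrom G X S) {x : V} (hx : x ∈ X) : S.Nonempty := by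
  have hall : reachableAvoiding G ∅ x = Set.univ := Set.eq_univ_of_forall fun y =>
    let ⟨p⟩ := hconn.preconnected x y
    ⟨p, fun _ _ => Set.notMem_empty _⟩
  obtain ⟨f, hf, hf0, -⟩ :=
    exists_ray_of_infinite_reachableAvoiding hlf (hall ▸ Set.infinite_univ)
  obtain ⟨n, hn⟩ := h f hf (hf0 ▸ hx)
  exact ⟨f n, hn⟩

lemma MeetsAllRaysFrom.supp_finite (hlf : ∀ v, (G.neighborSet v).Finite)
    (h : MeetsAllRaysFrom G X S) (v : {x | x ∉ S}) (hv : v.1 ∈ X) :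
    ((G.induce {x | x ∉ S}).connectedComponentMk v).supp.Finite := by
  refine Set.not_infinite.1 fun hinf => ?_
  obtain ⟨f, hf, hf0, hfS⟩ := exists_ray_of_supp_infinite hlf v hinf
  obtain ⟨n, hn⟩ := h f hf (hf0 ▸ hv)
  exact hfS n hn

lemma exists_ray_meeting_only (hmeets : MeetsAllRaysFrom G X S)
    (hmin : ∀ T ⊂ S, ¬ MeetsAllRaysFrom G X T) {s : V} (hs : s ∈ S) :
    ∃ f : ℕ → V, IsRay G f ∧ f 0 ∈ X ∧ ∃ n, f n = s ∧ ∀ m, f m ∈ S → m = n := by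
  have hsub : S \ {s} ⊂ S := Set.sdiff_singleton_ssubset.2 hs
  obtain ⟨f, hf, hf0, hfs⟩ : ∃ f : ℕ → V, IsRay G f ∧ f 0 ∈ X ∧ ∀ n, f n ∈ S → f n = s := by
    simpa [MeetsAllRaysFrom, not_and_not_right] using hmin _ hsub
  obtain ⟨n, hn⟩ := hmeets f hf hf0
  exact ⟨f, hf, hf0, n, hfs n hn, fun m hm => hf.1 ((hfs m hm).trans (hfs n hn).symm)⟩

-- On a ray from `X` meeting `S` only in `s`, the vertex before `s` lies in `C` and the tail
-- after `s` lies in an infinite component.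
lemma hasNeighborIn_of_mem_umbrella (hdisj : Disjoint X S) (hmeets : MeetsAllRaysFrom G X S)
    (hmin : ∀ T ⊂ S, ¬ MeetsAllRaysFrom G X T) {C : (G.induce {x | x ∉ S}).ConnectedComponent}
    (hXC : Subtype.val ⁻¹' X ⊆ C.supp) {s : V} (hs : s ∈ S) :
    HasNeighborIn G S s C ∧ ∃ B, B.supp.Infinite ∧ HasNeighborIn G S s B := by
  obtain ⟨f, hf, hf0, n, rfl, honly⟩ := exists_ray_meeting_only hmeets hmin hs
  have hfS : ∀ m ≠ n, f m ∉ S := fun m hm h => hm (honly m h)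
  obtain ⟨n, rfl⟩ : ∃ m, n = m + 1 :=
    Nat.exists_eq_succ_of_ne_zero fun h => hdisj.notMem_of_mem_left hf0 (h ▸ hs)
  have hbefore := connectedComponentMk_eq_of_chain hf.2 fun i (hi : i ≤ n) => hfS i (by omega)
  refine ⟨⟨f n, (hf.2 n).symm, hfS n (by omega), hbefore.trans (hXC hf0)⟩, _,
    (hf.tail (n + 2)).supp_infinite fun j => hfS _ (by omega),
    f (n + 2), hf.2 (n + 1), hfS _ (by omega), rfl⟩

def HasUmbrellaShape (G : SimpleGraph V) (S : Set V)
    (C : (G.induce {x | x ∉ S}).ConnectedComponent) : Prop :=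
  ∀ s ∈ S, ∃ B : (G.induce {x | x ∉ S}).ConnectedComponent,
    B.supp.Infinite ∧ ∀ K, HasNeighborIn G S s K ↔ K = C ∨ K = B

lemma hasUmbrellaShape_of_hFree_claw (hclaw : HFree claw G)
    {C : (G.induce {x | x ∉ S}).ConnectedComponent} (hC : C.supp.Finite)
    (h : ∀ s ∈ S, HasNeighborIn G S s C ∧ ∃ B, B.supp.Infinite ∧ HasNeighborIn G S s B) :
    HasUmbrellaShape G S C := by
  intro s hs
  obtain ⟨hsC, B, hB, hsB⟩ := h s hs
  refine ⟨B, hB, fun K => ⟨fun hsK => ?_, by rintro (rfl | rfl) <;> assumption⟩⟩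
  rcases eq_or_eq_or_eq_of_hasNeighborIn hclaw hsC hsB hsK with h | h | h
  · exact absurd (h ▸ hC) hB
  · exact Or.inl h.symm
  · exact Or.inr h.symm

namespace HasUmbrellaShape

variable {C : (G.induce {x | x ∉ S}).ConnectedComponent}

lemma hasNeighborIn (hU : HasUmbrellaShape G S C) {s : V} (hs : s ∈ S) :
    HasNeighborIn G S s C :=
  let ⟨_, _, hB⟩ := hU s hs
  (hB C).2 (Or.inl rfl)

lemma eq_of_hasNeighborIn (hU : HasUmbrellaShape G S C) (hC : C.supp.Finite) {s : V}
    (hs : s ∈ S) {K K' : (G.induce {x | x ∉ S}).ConnectedComponent}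
    (hsK : HasNeighborIn G S s K) (hsK' : HasNeighborIn G S s K')
    (hK : K.supp.Infinite) (hK' : K'.supp.Infinite) : K = K' := by
  obtain ⟨B, -, hB⟩ := hU s hs
  have hKB : ∀ K, HasNeighborIn G S s K → K.supp.Infinite → K = B := fun K hsK hK =>
    ((hB K).1 hsK).resolve_left fun h => hK (h ▸ hC)
  exact (hKB K hsK hK).trans (hKB K' hsK' hK').symm

lemma eq_or_supp_infinite (hU : HasUmbrellaShape G S C) (hconn : G.Connected)
    (hS : S.Nonempty) (K : (G.induce {x | x ∉ S}).ConnectedComponent) :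
    K = C ∨ K.supp.Infinite := by
  obtain ⟨s, hs, hsK⟩ := exists_hasNeighborIn hconn hS K
  obtain ⟨B, hB, hsB⟩ := hU s hs
  rcases (hsB K).1 hsK with rfl | rfl
  · exact Or.inl rfl
  · exact Or.inr hB

lemma finite_components (hU : HasUmbrellaShape G S C) (hconn : G.Connected)
    (hS : S.Finite) (hSne : S.Nonempty) :
    (Set.univ : Set (G.induce {x | x ∉ S}).ConnectedComponent).Finite := by
  refine (hS.biUnion (t := fun s => {K | HasNeighborIn G S s K}) fun s hs => ?_).subset
    fun K _ => ?_
  · obtain ⟨B, -, hB⟩ := hU s hs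
    exact ((Set.finite_singleton B).insert C).subset fun K hK => (hB K).1 hK
  · obtain ⟨s, hs, hsK⟩ := exists_hasNeighborIn hconn hSne K
    exact Set.mem_biUnion hs hsK

lemma isMinSeparator_attachments (hU : HasUmbrellaShape G S C) (hC : C.supp.Finite)
    (hconn : G.Connected) (hS : S.Nonempty) {K : (G.induce {x | x ∉ S}).ConnectedComponent}
    (hK : K.supp.Infinite) : IsMinSeparator G (attachments G S K) := by
  refine ⟨isSeparator_attachments fun h => hK (h ▸ hC), fun T hT => ?_⟩
  obtain ⟨s, ⟨hs, hsK⟩, hsT⟩ := Set.exists_of_ssubset hT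
  have hTS : T ⊆ S := fun t ht => (hT.1 ht).1
  refine not_isSeparator_of_forall_hasNeighborIn hTS C (fun s hs _ => hU.hasNeighborIn hs)
    fun K' => ?_
  rcases hU.eq_or_supp_infinite hconn hS K' with rfl | hK'
  · exact ⟨s, hs, hsT, hU.hasNeighborIn hs⟩
  obtain rfl | hKK' := eq_or_ne K' K
  · exact ⟨s, hs, hsT, hsK⟩
  obtain ⟨s', hs', hs'K'⟩ := exists_hasNeighborIn hconn hS K'
  exact ⟨s', hs', fun hs'T => hKK' (hU.eq_of_hasNeighborIn hC hs' hs'K' (hT.1 hs'T).2 hK' hK),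
    hs'K'⟩

lemma biUnion_attachments (hU : HasUmbrellaShape G S C) :
    ⋃ K ∈ {K : (G.induce {x | x ∉ S}).ConnectedComponent | K.supp.Infinite},
      attachments G S K = S := by
  refine Set.Subset.antisymm (Set.iUnion₂_subset fun K _ s hs => hs.1) fun s hs => ?_
  obtain ⟨B, hB, hsB⟩ := hU s hs
  exact Set.mem_biUnion hB ⟨hs, (hsB B).2 (Or.inr rfl)⟩

end HasUmbrellaShape

end Umbrella

theorem stmt_12_general {V : Type} [Infinite V] (G : SimpleGraph V)
    (hlf : ∀ v : V, (G.neighborSet v).Finite) (hconn : G.Connected)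
    (hclaw : HFree claw G) (X : Set V) (hXne : X.Nonempty)
    (hXconn : (G.induce X).Connected) (𝔖 : Set V) (h𝔖fin : 𝔖.Finite)
    (hdisj : Disjoint X 𝔖)
    (hmeets : ∀ f : ℕ → V, IsRay G f → f 0 ∈ X → ∃ n, f n ∈ 𝔖)
    (hmin : ∀ T ⊂ 𝔖, ¬ ∀ f : ℕ → V, IsRay G f → f 0 ∈ X → ∃ n, f n ∈ T) :
    ∃ (k : ℕ), 1 ≤ k ∧
      ∃ K : Fin k → (G.induce {x | x ∉ 𝔖}).ConnectedComponent,
        Function.Injective K ∧ (∀ i, (K i).supp.Infinite) ∧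
        (∀ K' : (G.induce {x | x ∉ 𝔖}).ConnectedComponent,
          K'.supp.Infinite → ∃ i, K' = K i) ∧
        ∃ S : Fin k → Set V,
          (⋃ i, S i) = 𝔖 ∧
          (∀ i j, i ≠ j → Disjoint (S i) (S j)) ∧
          (∀ i, IsMinSeparator G (S i)) ∧
          (∀ i, ∀ s ∈ S i, ∀ j : Fin k,
            ((∃ y, G.Adj s y ∧ ∃ hy : y ∉ 𝔖,
              (G.induce {x | x ∉ 𝔖}).connectedComponentMk ⟨y, hy⟩ = K j) ↔ j = i)) := by
  obtain ⟨x₀, hx₀⟩ := hXne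
  have hC := MeetsAllRaysFrom.supp_finite hlf hmeets ⟨x₀, hdisj.notMem_of_mem_left hx₀⟩ hx₀
  have h𝔖ne : 𝔖.Nonempty := MeetsAllRaysFrom.nonempty hlf hconn hmeets hx₀
  have hU := hasUmbrellaShape_of_hFree_claw hclaw hC fun s hs =>
    hasNeighborIn_of_mem_umbrella hdisj hmeets hmin
      (preimage_val_subset_supp hdisj hXconn.preconnected hx₀) hs
  obtain ⟨k, K, hKinj, hKrange⟩ := ((hU.finite_components hconn h𝔖fin h𝔖ne).subset
    (Set.subset_univ {K | K.supp.Infinite})).fin_param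
  have hKinf : ∀ i, (K i).supp.Infinite := fun i => hKrange.subset ⟨i, rfl⟩
  have hKsurj : ∀ K', K'.supp.Infinite → ∃ i, K' = K i := fun K' hK' =>
    let ⟨i, hi⟩ := hKrange.symm.subset hK'
    ⟨i, hi.symm⟩
  have hiff : ∀ i, ∀ s ∈ attachments G 𝔖 (K i), ∀ j, HasNeighborIn G 𝔖 s (K j) ↔ j = i :=
    fun i s hs j => ⟨fun hsj => hKinj (hU.eq_of_hasNeighborIn hC hs.1 hsj hs.2 (hKinf j) (hKinf i)),
      by rintro rfl; exact hs.2⟩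
  obtain ⟨s, hs⟩ := h𝔖ne
  obtain ⟨B, hB, -⟩ := hU s hs
  obtain ⟨i₀, -⟩ := hKsurj B hB
  refine ⟨k, i₀.pos, K, hKinj, hKinf, hKsurj, fun i => attachments G 𝔖 (K i), ?_,
    fun i j hij => Set.disjoint_left.2 fun s hsi hsj => hij ((hiff i s hsi j).1 hsj.2).symm,
    fun i => hU.isMinSeparator_attachments hC hconn ⟨s, hs⟩ (hKinf i), hiff⟩
  rw [← Set.biUnion_range (f := K) (g := attachments G 𝔖), hKrange, hU.biUnion_attachments]

/-- if `𝔖` is an `X`-umbrella, then `G − 𝔖` has `k ≥ 1` infinite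
components `K₁, …, K_k` and `𝔖` is a disjoint union of minimal vertex separators
`S₁, …, S_k` such that every vertex of `Sᵢ` has a neighbour in `K_j` iff `j = i`. -/
theorem stmt_12 {V : Type} [Infinite V] (G : SimpleGraph V)
    (hlf : ∀ v : V, (G.neighborSet v).Finite) (hconn : G.Connected)
    (hclaw : HFree claw G) (X : Set V) (hX : X.Finite) (hXne : X.Nonempty)
    (hXconn : (G.induce X).Connected) (𝔖 : Set V) (h𝔖fin : 𝔖.Finite)
    (hdisj : Disjoint X 𝔖)
    (hmeets : ∀ f : ℕ → V, IsRay G f → f 0 ∈ X → ∃ n, f n ∈ 𝔖)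
    (hmin : ∀ T ⊂ 𝔖, ¬ ∀ f : ℕ → V, IsRay G f → f 0 ∈ X → ∃ n, f n ∈ T) :
    ∃ (k : ℕ), 1 ≤ k ∧
      ∃ K : Fin k → (G.induce {x | x ∉ 𝔖}).ConnectedComponent,
        Function.Injective K ∧ (∀ i, (K i).supp.Infinite) ∧
        (∀ K' : (G.induce {x | x ∉ 𝔖}).ConnectedComponent,
          K'.supp.Infinite → ∃ i, K' = K i) ∧
        ∃ S : Fin k → Set V,
          (⋃ i, S i) = 𝔖 ∧
          (∀ i j, i ≠ j → Disjoint (S i) (S j)) ∧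
          (∀ i, IsMinSeparator G (S i)) ∧
          (∀ i, ∀ s ∈ S i, ∀ j : Fin k,
            ((∃ y, G.Adj s y ∧ ∃ hy : y ∉ 𝔖,
              (G.induce {x | x ∉ 𝔖}).connectedComponentMk ⟨y, hy⟩ = K j) ↔ j = i)) :=
  stmt_12_general G hlf hconn hclaw X hXne hXconn 𝔖 h𝔖fin hdisj hmeets hmin
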